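/- Let A : [0,1] → Sp(2n,ℝ) be a differentiable path satisfying A'(t) = J Q(t) A(t) with each Q(t) symmetric, and let B ∈ Sp(2n,ℝ). Then the path C(t) = A(t) B⁻¹ A(t) B satisfies C'(t) = J (Q(t) + (B A(t)⁻¹)^T Q(t) (B A(t)⁻¹)) C(t); in particular, if each Q(t) is positive semidefinite, then C is a semipositive path. -/

import Mathlib

open Matrix Set

/-- The standard complex structure on ℝ^{2n}, as a block matrix. -/
noncomputable def stdJ (n : ℕ) : Matrix (Fin n ⊕ Fin n) (Fin n ⊕ Fin n) ℝ :=
  Matrix.fromBlocks 0 (-1) 1 0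

/-!
If `A` is symplectic then `A⁻¹ J = J Aᵀ`, hence `J (A⁻¹)ᵀ = A J`. With these, the
conjugated term `J (B A⁻¹)ᵀ Q (B A⁻¹) · A B⁻¹ A B` collapses to `A B⁻¹ (J Q A) B`, so
`J (Q + (B A⁻¹)ᵀ Q (B A⁻¹)) C` is exactly the product-rule derivative
`A' B⁻¹ A B + A B⁻¹ A' B` of `C = A B⁻¹ A B`. Positive semidefiniteness of the new
Hamiltonian is preserved because congruence `Xᵀ Q X` preserves it.
-/

theorem hasDerivAt_matrix_mul_apply {l m p : Type*} [Fintype m]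
    {A : ℝ → Matrix l m ℝ} {C : ℝ → Matrix m p ℝ} {A' : Matrix l m ℝ} {C' : Matrix m p ℝ}
    {t : ℝ} (hA : ∀ i j, HasDerivAt (fun s => A s i j) (A' i j) t)
    (hC : ∀ i j, HasDerivAt (fun s => C s i j) (C' i j) t) (i : l) (k : p) :
    HasDerivAt (fun s => (A s * C s) i k) ((A' * C t + A t * C') i k) t := by
  simp only [mul_apply, Matrix.add_apply, ← Finset.sum_add_distrib]
  exact HasDerivAt.fun_sum fun j _ => (hA i j).fun_mul (hC j k)

namespace SymplecticGroup

variable {l R : Type*} [DecidableEq l] [Fintype l] [CommRing R]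
  {A B : Matrix (l ⊕ l) (l ⊕ l) R}

theorem inv_mul_J (hA : A ∈ symplecticGroup l R) : A⁻¹ * J l R = J l R * Aᵀ := by
  rw [inv_eq_symplectic_inv A hA, Matrix.mul_assoc, J_squared]
  simp

theorem J_mul_transpose_inv (hA : A ∈ symplecticGroup l R) :
    J l R * A⁻¹ᵀ = A * J l R := by
  simpa [transpose_mul] using congrArg transpose (inv_mul_J hA)

theorem J_mul_conj_mul_eq (hA : A ∈ symplecticGroup l R)
    (hB : B ∈ symplecticGroup l R) (M : Matrix (l ⊕ l) (l ⊕ l) R) :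
    J l R * ((B * A⁻¹)ᵀ * M * (B * A⁻¹)) * (A * B⁻¹ * A * B) =
      A * B⁻¹ * (J l R * M * A) * B :=
  calc J l R * ((B * A⁻¹)ᵀ * M * (B * A⁻¹)) * (A * B⁻¹ * A * B)
      = (J l R * A⁻¹ᵀ) * (Bᵀ * M * B) * ((A⁻¹ * A) * (B⁻¹ * A * B)) := by
        simp only [transpose_mul, Matrix.mul_assoc]
    _ = A * ((J l R * Bᵀ) * M) * (B * B⁻¹ * (A * B)) := by
        rw [J_mul_transpose_inv hA, nonsing_inv_mul A (symplectic_det hA)]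
        simp only [Matrix.one_mul, Matrix.mul_assoc]
    _ = A * B⁻¹ * (J l R * M * A) * B := by
        rw [← inv_mul_J hB, mul_nonsing_inv B (symplectic_det hB)]
        simp only [Matrix.one_mul, Matrix.mul_assoc]

end SymplecticGroup

theorem stdJ_eq_J (n : ℕ) : stdJ n = J (Fin n) ℝ := rfl

theorem composite_path_semipositive_general (n : ℕ)
    (A Q : ℝ → Matrix (Fin n ⊕ Fin n) (Fin n ⊕ Fin n) ℝ)
    (B : Matrix (Fin n ⊕ Fin n) (Fin n ⊕ Fin n) ℝ)
    (hA_symp : ∀ t ∈ Icc (0:ℝ) 1, (A t)ᵀ * stdJ n * A t = stdJ n)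
    (hB_symp : Bᵀ * stdJ n * B = stdJ n)
    (hA' : ∀ t ∈ Icc (0:ℝ) 1, ∀ i j,
      HasDerivAt (fun s => A s i j) ((stdJ n * Q t * A t) i j) t) :
    (∀ t ∈ Icc (0:ℝ) 1, ∀ i j,
        HasDerivAt (fun s => (A s * B⁻¹ * A s * B) i j)
          ((stdJ n * (Q t + (B * (A t)⁻¹)ᵀ * Q t * (B * (A t)⁻¹)) *
            (A t * B⁻¹ * A t * B)) i j) t) ∧
      ((∀ t ∈ Icc (0:ℝ) 1, (Q t).PosSemidef) →
        ∀ t ∈ Icc (0:ℝ) 1,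
          (Q t + (B * (A t)⁻¹)ᵀ * Q t * (B * (A t)⁻¹)).PosSemidef) := by
  refine ⟨fun t ht => ?_, fun hQ t ht => ?_⟩
  · have hAt := SymplecticGroup.mem_iff'.mpr (hA_symp t ht)
    have hB := SymplecticGroup.mem_iff'.mpr hB_symp
    have hconst : ∀ (M : Matrix (Fin n ⊕ Fin n) (Fin n ⊕ Fin n) ℝ) i j,
        HasDerivAt (fun _ => M i j) ((0 : Matrix _ _ ℝ) i j) t :=
      fun M i j => hasDerivAt_const t (M i j)
    have hC := hasDerivAt_matrix_mul_apply
      (hasDerivAt_matrix_mul_apply (hasDerivAt_matrix_mul_apply (hA' t ht) (hconst B⁻¹))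
        (hA' t ht)) (hconst B)
    rw [stdJ_eq_J] at hC ⊢
    rw [Matrix.mul_add, Matrix.add_mul, SymplecticGroup.J_mul_conj_mul_eq hAt hB]
    convert hC using 2
    simp only [Matrix.mul_zero, add_zero, Matrix.add_mul, Matrix.mul_assoc]
  · simpa [conjTranspose_eq_transpose_of_trivial] using
      (hQ t ht).add ((hQ t ht).conjTranspose_mul_mul_same (B * (A t)⁻¹))

/-- If `A(t)` is a differentiable path of symplectic matrices with
`A'(t) = J Q(t) A(t)`, `Q(t)` symmetric, and `B` is symplectic, then
`C(t) = A(t) B⁻¹ A(t) B` satisfies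
`C'(t) = J (Q(t) + (B A(t)⁻¹)ᵀ Q(t) (B A(t)⁻¹)) C(t)`;
in particular if each `Q(t)` is positive semidefinite then `C` is a
semipositive path. -/
theorem composite_path_semipositive (n : ℕ)
    (A Q : ℝ → Matrix (Fin n ⊕ Fin n) (Fin n ⊕ Fin n) ℝ)
    (B : Matrix (Fin n ⊕ Fin n) (Fin n ⊕ Fin n) ℝ)
    (hA_symp : ∀ t ∈ Icc (0:ℝ) 1, (A t)ᵀ * stdJ n * A t = stdJ n)
    (hB_symp : Bᵀ * stdJ n * B = stdJ n)
    (hQ_symm : ∀ t ∈ Icc (0:ℝ) 1, (Q t)ᵀ = Q t)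
    (hA' : ∀ t ∈ Icc (0:ℝ) 1, ∀ i j,
      HasDerivAt (fun s => A s i j) ((stdJ n * Q t * A t) i j) t) :
    (∀ t ∈ Icc (0:ℝ) 1, ∀ i j,
        HasDerivAt (fun s => (A s * B⁻¹ * A s * B) i j)
          ((stdJ n * (Q t + (B * (A t)⁻¹)ᵀ * Q t * (B * (A t)⁻¹)) *
            (A t * B⁻¹ * A t * B)) i j) t) ∧
      ((∀ t ∈ Icc (0:ℝ) 1, (Q t).PosSemidef) →
        ∀ t ∈ Icc (0:ℝ) 1,
          (Q t + (B * (A t)⁻¹)ᵀ * Q t * (B * (A t)⁻¹)).PosSemidef) :=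
  composite_path_semipositive_general n A Q B hA_symp hB_symp hA'
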